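/- The Anderson–Darling circular coefficients satisfy b_{k,1}^{AD} := (1/(πk²))∫_0^π (1 − cos(2kθ))/((π−θ)θ) dθ = O(log(k)/k²) as k → ∞; in particular ∑_{k=1}^∞ b_{k,1}^{AD} < ∞. -/

import Mathlib

open Filter

/-- The circular Anderson–Darling Chebyshev coefficient
`b_{k,1}^{AD} = (1/(πk²))∫₀^π (1 − cos(2kθ))/((π−θ)θ) dθ`. -/
noncomputable def adCoeff (k : ℕ) : ℝ :=
  (1 / (Real.pi * (k : ℝ) ^ 2)) *
    ∫ θ in (0 : ℝ)..Real.pi, (1 - Real.cos (2 * (k : ℝ) * θ)) / ((Real.pi - θ) * θ)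

section ADAuxiliary

set_option maxHeartbeats 1000000

open Real MeasureTheory intervalIntegral

/-- The integrand of the Anderson–Darling coefficient. -/
noncomputable def adf (k : ℕ) (θ : ℝ) : ℝ :=
  (1 - Real.cos (2 * (k : ℝ) * θ)) / ((Real.pi - θ) * θ)

lemma adf_pi (k : ℕ) : adf k Real.pi = 0 := by simp [adf]

lemma adf_zero (k : ℕ) : adf k 0 = 0 := by simp [adf]

lemma one_sub_cos_le (x : ℝ) : 1 - Real.cos x ≤ x ^ 2 / 2 := by
  have := Real.one_sub_sq_div_two_le_cos (x := x); linarith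

lemma adf_nonneg (k : ℕ) (θ : ℝ) (h0 : 0 ≤ θ) (h1 : θ ≤ Real.pi) : 0 ≤ adf k θ :=
  div_nonneg (by have := Real.cos_le_one (2 * (k:ℝ) * θ); linarith)
    (mul_nonneg (by linarith) h0)

lemma adf_le_left (k : ℕ) (θ : ℝ) (h0 : 0 < θ) (h1 : θ < Real.pi) :
    adf k θ ≤ 2 * (k:ℝ)^2 * θ / (Real.pi - θ) := by
  have hd : (0:ℝ) ≤ (Real.pi - θ) * θ := (mul_pos (by linarith) h0).le
  have h2 : 1 - Real.cos (2 * (k:ℝ) * θ) ≤ 2 * (k:ℝ)^2 * θ * θ := by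
    have := one_sub_cos_le (2 * (k:ℝ) * θ); nlinarith
  calc adf k θ ≤ (2 * (k:ℝ)^2 * θ * θ) / ((Real.pi - θ) * θ) :=
        div_le_div_of_nonneg_right h2 hd
    _ = 2 * (k:ℝ)^2 * θ / (Real.pi - θ) := mul_div_mul_right _ _ (ne_of_gt h0)

lemma cos_symm (k : ℕ) (θ : ℝ) :
    Real.cos (2 * (k:ℝ) * θ) = Real.cos (2 * (k:ℝ) * (Real.pi - θ)) := by
  have h : 2 * (k:ℝ) * (Real.pi - θ) = ((2 * k : ℕ) : ℝ) * Real.pi - 2 * (k:ℝ) * θ := by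
    push_cast; ring
  rw [h, Real.cos_sub, Real.sin_nat_mul_pi]
  have : Real.cos (((2 * k : ℕ) : ℝ) * Real.pi) = 1 := by
    rw [show ((2 * k : ℕ) : ℝ) * Real.pi = (k:ℝ) * (2 * Real.pi) by push_cast; ring]
    exact Real.cos_nat_mul_two_pi k
  rw [this]; ring

lemma adf_le_right (k : ℕ) (θ : ℝ) (h0 : 0 < θ) (h1 : θ < Real.pi) :
    adf k θ ≤ 2 * (k:ℝ)^2 * (Real.pi - θ) / θ := by
  have hd : (0:ℝ) ≤ (Real.pi - θ) * θ := (mul_pos (by linarith) h0).le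
  have h2 : 1 - Real.cos (2 * (k:ℝ) * θ) ≤ (Real.pi - θ) * (2 * (k:ℝ)^2 * (Real.pi - θ)) := by
    rw [cos_symm]
    have := one_sub_cos_le (2 * (k:ℝ) * (Real.pi - θ)); nlinarith
  calc adf k θ ≤ ((Real.pi - θ) * (2 * (k:ℝ)^2 * (Real.pi - θ))) / ((Real.pi - θ) * θ) :=
        div_le_div_of_nonneg_right h2 hd
    _ = 2 * (k:ℝ)^2 * (Real.pi - θ) / θ := mul_div_mul_left _ _ (by linarith)

lemma adf_le_two_div (k : ℕ) (θ : ℝ) (h0 : 0 < θ) (h1 : θ < Real.pi) :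
    adf k θ ≤ 2 / ((Real.pi - θ) * θ) := by
  exact div_le_div_of_nonneg_right
    (by have := Real.neg_one_le_cos (2 * (k:ℝ) * θ); linarith)
    (mul_pos (by linarith) h0).le

lemma adf_le_const (k : ℕ) (θ : ℝ) (h0 : 0 < θ) (h1 : θ < Real.pi) :
    adf k θ ≤ 2 * (k:ℝ)^2 := by
  rcases le_total θ (Real.pi - θ) with h | h
  · refine (adf_le_left k θ h0 h1).trans ?_
    rw [div_le_iff₀ (by linarith)]
    nlinarith [sq_nonneg (k:ℝ)]
  · refine (adf_le_right k θ h0 h1).trans ?_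
    rw [div_le_iff₀ h0]
    nlinarith [sq_nonneg (k:ℝ)]

lemma adf_measurable (k : ℕ) : Measurable (adf k) := by
  unfold adf
  exact (measurable_const.sub (Real.measurable_cos.comp (measurable_id.const_mul _))).div
    ((measurable_const.sub measurable_id).mul measurable_id)

lemma adf_intOn (k : ℕ) : IntervalIntegrable (adf k) volume 0 Real.pi := by
  rw [intervalIntegrable_iff_integrableOn_Ioc_of_le Real.pi_pos.le]
  refine Integrable.mono' (integrable_const (2 * (k:ℝ)^2))
    (adf_measurable k).aestronglyMeasurable ?_
  filter_upwards [ae_restrict_mem measurableSet_Ioc] with θ hθ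
  rw [Real.norm_eq_abs, abs_of_nonneg (adf_nonneg k θ hθ.1.le hθ.2)]
  rcases eq_or_lt_of_le hθ.2 with rfl | hlt
  · simp [adf]
  · exact adf_le_const k θ hθ.1 hlt

lemma integral_bound (k : ℕ) (hk : 1 ≤ k) :
    ∫ θ in (0:ℝ)..Real.pi, adf k θ ≤
      1 + (8 / Real.pi) * Real.log (Real.pi / 2 * k) := by
  have hπ := Real.pi_gt_three
  have hk0 : (0:ℝ) < (k:ℝ) := by exact_mod_cast hk
  set ε : ℝ := 1 / (k:ℝ) with hεdef
  have hε : 0 < ε := by positivity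
  have hε1 : ε ≤ 1 := by
    rw [hεdef, div_le_one hk0]; exact_mod_cast hk
  have h1 : ε ≤ Real.pi / 2 := by linarith
  have h2 : Real.pi / 2 ≤ Real.pi - ε := by linarith
  have h3 : Real.pi - ε ≤ Real.pi := by linarith
  have mem : ∀ x : ℝ, 0 ≤ x → x ≤ Real.pi → x ∈ Set.uIcc (0:ℝ) Real.pi := by
    intro x hx hx'
    rw [Set.uIcc_of_le Real.pi_pos.le]; exact ⟨hx, hx'⟩
  have I1 : IntervalIntegrable (adf k) volume 0 ε :=
    (adf_intOn k).mono_set (Set.uIcc_subset_uIcc (mem 0 le_rfl Real.pi_pos.le)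
      (mem ε hε.le (by linarith)))
  have I2 : IntervalIntegrable (adf k) volume ε (Real.pi/2) :=
    (adf_intOn k).mono_set (Set.uIcc_subset_uIcc (mem ε hε.le (by linarith))
      (mem (Real.pi/2) (by linarith) (by linarith)))
  have I3 : IntervalIntegrable (adf k) volume (Real.pi/2) (Real.pi - ε) :=
    (adf_intOn k).mono_set (Set.uIcc_subset_uIcc (mem (Real.pi/2) (by linarith) (by linarith))
      (mem (Real.pi - ε) (by linarith) h3))
  have I4 : IntervalIntegrable (adf k) volume (Real.pi - ε) Real.pi :=
    (adf_intOn k).mono_set (Set.uIcc_subset_uIcc (mem (Real.pi - ε) (by linarith) h3)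
      (mem Real.pi Real.pi_pos.le le_rfl))
  have e3 : (∫ θ in (Real.pi/2)..(Real.pi - ε), adf k θ) + ∫ θ in (Real.pi - ε)..Real.pi, adf k θ
      = ∫ θ in (Real.pi/2)..Real.pi, adf k θ := integral_add_adjacent_intervals I3 I4
  have e2 : (∫ θ in ε..(Real.pi/2), adf k θ) + ∫ θ in (Real.pi/2)..Real.pi, adf k θ
      = ∫ θ in ε..Real.pi, adf k θ := integral_add_adjacent_intervals I2 (I3.trans I4)
  have e1 : (∫ θ in (0:ℝ)..ε, adf k θ) + ∫ θ in ε..Real.pi, adf k θ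
      = ∫ θ in (0:ℝ)..Real.pi, adf k θ :=
    integral_add_adjacent_intervals I1 (I2.trans (I3.trans I4))
  -- piece 1
  have B1 : (∫ θ in (0:ℝ)..ε, adf k θ) ≤ 1/2 := by
    have hb : (∫ θ in (0:ℝ)..ε, adf k θ) ≤ ∫ θ in (0:ℝ)..ε, (k:ℝ)^2 * θ := by
      refine integral_mono_on hε.le I1
        ((continuous_const.mul continuous_id).intervalIntegrable _ _) ?_
      rintro θ ⟨hθ0, hθε⟩
      rcases eq_or_lt_of_le hθ0 with rfl | hθ0'
      · simp [adf_zero]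
      · refine (adf_le_left k θ hθ0' (by linarith)).trans ?_
        rw [div_le_iff₀ (by linarith)]
        nlinarith [sq_nonneg (k:ℝ), mul_nonneg (sq_nonneg (k:ℝ)) hθ0'.le]
    calc (∫ θ in (0:ℝ)..ε, adf k θ) ≤ ∫ θ in (0:ℝ)..ε, (k:ℝ)^2 * θ := hb
      _ = (k:ℝ)^2 * ((ε^2 - 0^2)/2) := by
          rw [intervalIntegral.integral_const_mul, integral_id]
      _ = 1/2 := by rw [hεdef]; field_simp; simp
  -- piece 2
  have B2 : (∫ θ in ε..(Real.pi/2), adf k θ)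
      ≤ (4/Real.pi) * Real.log ((Real.pi/2)/ε) := by
    have hb : (∫ θ in ε..(Real.pi/2), adf k θ)
        ≤ ∫ θ in ε..(Real.pi/2), (4/Real.pi) * (1/θ) := by
      refine integral_mono_on h1 I2 ?_ ?_
      · apply ContinuousOn.intervalIntegrable
        apply ContinuousOn.mul continuousOn_const
        apply ContinuousOn.div continuousOn_const continuousOn_id
        intro x hx
        rw [Set.uIcc_of_le h1] at hx
        exact ne_of_gt (lt_of_lt_of_le hε hx.1)
      rintro θ ⟨hθ1, hθ2⟩
      have hθ0 : 0 < θ := lt_of_lt_of_le hε hθ1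
      refine (adf_le_two_div k θ hθ0 (by linarith)).trans ?_
      have heq : (4/Real.pi) * (1/θ) = 4/(Real.pi*θ) := by field_simp
      rw [heq, div_le_div_iff₀ (by nlinarith) (by positivity)]
      nlinarith [mul_nonneg hθ0.le (by linarith : (0:ℝ) ≤ Real.pi - 2*θ)]
    calc (∫ θ in ε..(Real.pi/2), adf k θ) ≤ _ := hb
      _ = (4/Real.pi) * Real.log ((Real.pi/2)/ε) := by
          rw [intervalIntegral.integral_const_mul, integral_one_div]
          rw [Set.uIcc_of_le h1]
          rintro ⟨h, _⟩; linarith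
  -- piece 3
  have B3 : (∫ θ in (Real.pi/2)..(Real.pi - ε), adf k θ)
      ≤ (4/Real.pi) * Real.log ((Real.pi/2)/ε) := by
    have hb : (∫ θ in (Real.pi/2)..(Real.pi - ε), adf k θ)
        ≤ ∫ θ in (Real.pi/2)..(Real.pi - ε), (4/Real.pi) * (1/(Real.pi - θ)) := by
      refine integral_mono_on h2 I3 ?_ ?_
      · apply ContinuousOn.intervalIntegrable
        apply ContinuousOn.mul continuousOn_const
        apply ContinuousOn.div continuousOn_const
          (continuousOn_const.sub continuousOn_id)
        intro x hx
        rw [Set.uIcc_of_le h2] at hx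
        show Real.pi - x ≠ 0
        have : x ≤ Real.pi - ε := hx.2
        exact ne_of_gt (by linarith)
      rintro θ ⟨hθ1, hθ2⟩
      have hθπ : θ < Real.pi := by linarith
      have hθ0 : 0 < θ := by linarith
      refine (adf_le_two_div k θ hθ0 hθπ).trans ?_
      have hπθ : 0 < Real.pi - θ := by linarith
      have heq : (4/Real.pi) * (1/(Real.pi - θ)) = 4/(Real.pi*(Real.pi - θ)) := by field_simp
      rw [heq, div_le_div_iff₀ (by nlinarith) (by positivity)]
      nlinarith [mul_nonneg hπθ.le (by linarith : (0:ℝ) ≤ 2*θ - Real.pi)]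
    have key : (∫ θ in (Real.pi/2)..(Real.pi - ε), 1/(Real.pi - θ))
        = Real.log ((Real.pi/2)/ε) := by
      rw [intervalIntegral.integral_comp_sub_left (fun u : ℝ => 1/u) Real.pi,
        show Real.pi - (Real.pi - ε) = ε by ring,
        show Real.pi - Real.pi/2 = Real.pi/2 by ring, integral_one_div]
      rw [Set.uIcc_of_le h1]
      rintro ⟨h, _⟩; linarith
    calc (∫ θ in (Real.pi/2)..(Real.pi - ε), adf k θ) ≤ _ := hb
      _ = (4/Real.pi) * Real.log ((Real.pi/2)/ε) := by
          rw [intervalIntegral.integral_const_mul, key]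
  -- piece 4
  have B4 : (∫ θ in (Real.pi - ε)..Real.pi, adf k θ) ≤ 1/2 := by
    have hb : (∫ θ in (Real.pi - ε)..Real.pi, adf k θ)
        ≤ ∫ θ in (Real.pi - ε)..Real.pi, (k:ℝ)^2 * (Real.pi - θ) := by
      refine integral_mono_on h3 I4
        ((continuous_const.mul (continuous_const.sub continuous_id)).intervalIntegrable _ _) ?_
      rintro θ ⟨hθ1, hθ2⟩
      rcases eq_or_lt_of_le hθ2 with rfl | hθπ
      · simp [adf_pi]
      · have hθ0 : 0 < θ := by linarith
        refine (adf_le_right k θ hθ0 hθπ).trans ?_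
        rw [div_le_iff₀ hθ0]
        have ha : (0:ℝ) ≤ (k:ℝ)^2 * (Real.pi - θ) := mul_nonneg (sq_nonneg _) (by linarith)
        nlinarith [mul_nonneg ha (by linarith : (0:ℝ) ≤ θ - 2)]
    have key : (∫ θ in (Real.pi - ε)..Real.pi, (Real.pi - θ)) = ε^2/2 := by
      rw [intervalIntegral.integral_comp_sub_left (fun u : ℝ => u) Real.pi,
        show Real.pi - Real.pi = (0:ℝ) by ring,
        show Real.pi - (Real.pi - ε) = ε by ring, integral_id]
      ring
    calc (∫ θ in (Real.pi - ε)..Real.pi, adf k θ) ≤ _ := hb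
      _ = (k:ℝ)^2 * (ε^2/2) := by rw [intervalIntegral.integral_const_mul, key]
      _ = 1/2 := by rw [hεdef]; field_simp
  have hlog : Real.log ((Real.pi/2)/ε) = Real.log (Real.pi/2 * k) := by
    congr 1; rw [hεdef]; field_simp
  rw [← e1, ← e2, ← e3]
  rw [hlog] at B2 B3
  have hsum : (8/Real.pi) * Real.log (Real.pi/2 * k)
      = (4/Real.pi) * Real.log (Real.pi/2 * k) + (4/Real.pi) * Real.log (Real.pi/2 * k) := by
    ring
  linarith

lemma adCoeff_eq (k : ℕ) :
    adCoeff k = (1 / (Real.pi * (k : ℝ) ^ 2)) * ∫ θ in (0:ℝ)..Real.pi, adf k θ := rfl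

lemma adCoeff_nonneg (k : ℕ) : 0 ≤ adCoeff k := by
  rw [adCoeff_eq]
  refine mul_nonneg (by positivity) ?_
  exact intervalIntegral.integral_nonneg Real.pi_pos.le fun θ hθ => adf_nonneg k θ hθ.1 hθ.2

lemma adCoeff_le (k : ℕ) (hk : 3 ≤ k) :
    adCoeff k ≤ 3 * (Real.log k / (k:ℝ)^2) := by
  have hπ := Real.pi_gt_three
  have hk0 : (0:ℝ) < (k:ℝ) := by exact_mod_cast Nat.lt_of_lt_of_le (by norm_num) hk
  have hk2 : (0:ℝ) < (k:ℝ)^2 := by positivity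
  have hlogk : 1 ≤ Real.log k := by
    rw [Real.le_log_iff_exp_le hk0]
    have h3 : (3:ℝ) ≤ (k:ℝ) := by exact_mod_cast hk
    have := Real.exp_one_lt_d9
    linarith
  have hI := integral_bound k (le_trans (by norm_num) hk)
  have hmul : Real.log (Real.pi/2 * k) = Real.log (Real.pi/2) + Real.log k :=
    Real.log_mul (by positivity) (ne_of_gt hk0)
  have hlogπ2 : Real.log (Real.pi/2) ≤ 1 := by
    have := Real.log_le_sub_one_of_pos (x := Real.pi/2) (by positivity)
    have hπ4 : Real.pi < 4 := by linarith [Real.pi_lt_d2]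
    linarith
  have hlogπ0 : 0 ≤ Real.log (Real.pi/2) := Real.log_nonneg (by linarith)
  have h8 : (8/Real.pi) * (Real.log (Real.pi/2) + Real.log k)
      ≤ (8/3) * (Real.log (Real.pi/2) + Real.log k) := by
    refine mul_le_mul_of_nonneg_right ?_ (by linarith)
    rw [div_le_div_iff₀ Real.pi_pos (by norm_num)]
    linarith
  have hIle : (∫ θ in (0:ℝ)..Real.pi, adf k θ) ≤ 7 * Real.log k := by
    rw [hmul] at hI
    linarith
  rw [adCoeff_eq]
  have step1 : (1 / (Real.pi * (k:ℝ)^2)) * (∫ θ in (0:ℝ)..Real.pi, adf k θ)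
      ≤ (1 / (Real.pi * (k:ℝ)^2)) * (7 * Real.log k) :=
    mul_le_mul_of_nonneg_left hIle (by positivity)
  have step2 : (1 / (Real.pi * (k:ℝ)^2)) * (7 * Real.log k)
      = (7/Real.pi) * (Real.log k / (k:ℝ)^2) := by
    field_simp
  have step3 : (7/Real.pi) * (Real.log k / (k:ℝ)^2) ≤ 3 * (Real.log k / (k:ℝ)^2) := by
    refine mul_le_mul_of_nonneg_right ?_ (by positivity)
    rw [div_le_iff₀ Real.pi_pos]; linarith
  calc _ ≤ _ := step1
    _ = _ := step2
    _ ≤ _ := step3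

lemma bigO : (fun k : ℕ => adCoeff k) =O[atTop] (fun k : ℕ => Real.log k / (k : ℝ) ^ 2) := by
  rw [Asymptotics.isBigO_iff]
  refine ⟨3, ?_⟩
  filter_upwards [eventually_ge_atTop 3] with k hk
  have hk1 : (1:ℝ) ≤ (k:ℝ) := by exact_mod_cast Nat.one_le_iff_ne_zero.mpr (by omega)
  have hg : 0 ≤ Real.log k / (k:ℝ)^2 := div_nonneg (Real.log_nonneg hk1) (sq_nonneg _)
  rw [Real.norm_eq_abs, Real.norm_eq_abs, abs_of_nonneg (adCoeff_nonneg k), abs_of_nonneg hg]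
  exact adCoeff_le k hk

lemma sum_g : Summable (fun n : ℕ => Real.log n / (n:ℝ)^2) := by
  refine Summable.of_nonneg_of_le (fun n => ?_) (fun n => ?_)
    ((Real.summable_one_div_nat_rpow.mpr (by norm_num : (1:ℝ) < 3/2)).mul_left 2)
  · rcases Nat.eq_zero_or_pos n with rfl | hn
    · simp
    · exact div_nonneg (Real.log_nonneg (by exact_mod_cast hn)) (sq_nonneg _)
  · rcases Nat.eq_zero_or_pos n with rfl | hn
    · simp
    · have hn0 : (0:ℝ) < (n:ℝ) := by exact_mod_cast hn
      have hn1 : (1:ℝ) ≤ (n:ℝ) := by exact_mod_cast hn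
      have hlog : Real.log n ≤ 2 * Real.sqrt n := by
        have h1 : Real.log (Real.sqrt n) = Real.log n / 2 := Real.log_sqrt hn0.le
        have h2 : Real.log (Real.sqrt n) ≤ Real.sqrt n - 1 :=
          Real.log_le_sub_one_of_pos (Real.sqrt_pos.mpr hn0)
        nlinarith [Real.sqrt_nonneg (n:ℝ)]
      have e : Real.sqrt n / (n:ℝ)^2 = 1/(n:ℝ)^((3:ℝ)/2) := by
        rw [Real.sqrt_eq_rpow, ← Real.rpow_natCast (n:ℝ) 2, ← Real.rpow_sub hn0,
          show ((1:ℝ)/2 - (2:ℕ) : ℝ) = -(3/2) by norm_num,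
          Real.rpow_neg hn0.le, one_div]
      calc Real.log n / (n:ℝ)^2 ≤ (2 * Real.sqrt n) / (n:ℝ)^2 :=
            div_le_div_of_nonneg_right hlog (by positivity)
        _ = 2 * (Real.sqrt n / (n:ℝ)^2) := by ring
        _ = 2 * (1/(n:ℝ)^((3:ℝ)/2)) := by rw [e]


end ADAuxiliary

theorem adCoeff_isBigO_and_summable :
    (fun k : ℕ => adCoeff k) =O[atTop] (fun k : ℕ => Real.log k / (k : ℝ) ^ 2)
      ∧ Summable (fun k : ℕ => adCoeff (k + 1)) := by
  refine ⟨bigO, ?_⟩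
  exact (summable_nat_add_iff 1).mpr (summable_of_isBigO_nat sum_g bigO)
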